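/- arXiv:1412.1224 — 2 statements merged into one kernel-verified Lean document; each statement's English description precedes it below -/
import Mathlib

section
/- Under the hypotheses of the previous statement (ρ, χ, c² > 0, columns of ∇Y nonzero), the six characteristic speeds u₁, u₁, u₁ ± √((A₁+√A₂)/ρ), u₁ ± √((A₁−√A₂)/ρ) are all real, i.e. the neohookean system is hyperbolic. -/
/-- Hyperbolicity of the neohookean system: the arguments of the square roots in the
six characteristic speeds `u₁, u₁, u₁ ± √((𝒜₁+√𝒜₂)/ρ), u₁ ± √((𝒜₁−√𝒜₂)/ρ)`
are nonnegative, hence all speeds are real. -/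
theorem stmt_6 (ρ χ c2 Y11 Y21 Y12 Y22 u₁ : ℝ)
    (hρ : 0 < ρ) (hχ : 0 < χ) (hc2 : 0 < c2)
    (hcol1 : ¬(Y11 = 0 ∧ Y21 = 0)) (hcol2 : ¬(Y12 = 0 ∧ Y22 = 0)) :
    let αY := Y11 ^ 2 + Y21 ^ 2
    let βY := Y12 ^ 2 + Y22 ^ 2
    let δY := Y11 * Y12 + Y21 * Y22
    let A₁ := ρ * c2 / 2 + χ * (αY + βY)
    let A₂ := (ρ * c2 / 2 + χ * (αY - βY)) ^ 2 + 4 * χ ^ 2 * δY ^ 2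
    0 ≤ (A₁ + Real.sqrt A₂) / ρ ∧ 0 ≤ (A₁ - Real.sqrt A₂) / ρ := by
  intro αY βY δY A₁ A₂
  have hβ : 0 < βY := by
    rcases not_and_or.mp hcol2 with h | h <;> positivity
  have hA1 : 0 ≤ A₁ := by positivity
  have hA2le : A₂ ≤ A₁ ^ 2 := by
    have hcs : 0 ≤ (Y11 * Y22 - Y21 * Y12) ^ 2 := sq_nonneg _
    have hβ' : 0 < Y12 ^ 2 + Y22 ^ 2 := hβ
    simp only [A₁, A₂, αY, βY, δY]
    nlinarith [mul_nonneg (sq_nonneg χ) hcs,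
      mul_pos (mul_pos hρ hc2) (mul_pos hχ hβ')]
  have hs : Real.sqrt A₂ ≤ A₁ := by
    calc Real.sqrt A₂ ≤ Real.sqrt (A₁ ^ 2) := Real.sqrt_le_sqrt hA2le
    _ = A₁ := by rw [Real.sqrt_sq hA1]
  constructor
  · have := Real.sqrt_nonneg A₂
    positivity
  · apply div_nonneg _ hρ.le
    linarith
end

section
/- In the HLLC solver, given left/right states with Q_l = F(Ψ_l) − s_lΨ_l, Q_r = F(Ψ_r) − s_rΨ_r and defining u₁* = (Q_l² − Q_r²)/(Q_l¹ − Q_r¹), (σ¹¹)* = (Q_l²Q_r¹ − Q_l¹Q_r²)/(Q_l¹ − Q_r¹), ρ⁻ = Q_l¹/(u₁* − s_l), ρ⁺ = Q_r¹/(u₁* − s_r), the first two components of the Rankine–Hugoniot relations F⁻ − F(Ψ_l) = s_l(Ψ⁻ − Ψ_l) and F(Ψ_r) − F⁺ = s_r(Ψ_r − Ψ⁺) are satisfied, where the first two components of Ψ± are (ρ±, ρ±u₁*) and of F± are (ρ±u₁*, ρ±(u₁*)² − (σ¹¹)*). -/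
/-- The HLLC intermediate states satisfy the first two components of the
Rankine–Hugoniot relations across the outer waves `s_l`, `s_r`. Here
`(ρ_l, m_l, P_l)` and `(ρ_r, m_r, P_r)` are the density, mass flux and momentum
flux of the left/right states, `Q¹ = m − sρ`, `Q² = P − sm`, and the momentum
flux of the star states is `ρ^± (u₁*)² − (σ¹¹)*`. -/
theorem stmt_12 (ρl ρr ml mr Pl Pr sl sr : ℝ)
    (hρl : 0 < ρl) (hρr : 0 < ρr) :
    let Ql1 := ml - sl * ρl
    let Qr1 := mr - sr * ρr
    let Ql2 := Pl - sl * ml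
    let Qr2 := Pr - sr * mr
    Ql1 ≠ Qr1 →
    let ustar := (Ql2 - Qr2) / (Ql1 - Qr1)
    let σstar := (Ql2 * Qr1 - Ql1 * Qr2) / (Ql1 - Qr1)
    ustar ≠ sl → ustar ≠ sr →
    let ρm := Ql1 / (ustar - sl)
    let ρp := Qr1 / (ustar - sr)
    (ρm * ustar - ml = sl * (ρm - ρl)) ∧
    ((ρm * ustar ^ 2 - σstar) - Pl = sl * (ρm * ustar - ml)) ∧
    (mr - ρp * ustar = sr * (ρr - ρp)) ∧
    (Pr - (ρp * ustar ^ 2 - σstar) = sr * (mr - ρp * ustar)) := by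
  intro Ql1 Qr1 Ql2 Qr2 hne ustar σstar hl hr ρm ρp
  have hd : (ml - sl * ρl) - (mr - sr * ρr) ≠ 0 := sub_ne_zero.mpr hne
  have he : ustar - sl ≠ 0 := sub_ne_zero.mpr hl
  have hf : ustar - sr ≠ 0 := sub_ne_zero.mpr hr
  have hm : ρm * (ustar - sl) = ml - sl * ρl := div_mul_cancel₀ _ he
  have hp : ρp * (ustar - sr) = mr - sr * ρr := div_mul_cancel₀ _ hf
  have hu : ustar * ((ml - sl * ρl) - (mr - sr * ρr))
      = (Pl - sl * ml) - (Pr - sr * mr) := div_mul_cancel₀ _ hd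
  have hσ : σstar * ((ml - sl * ρl) - (mr - sr * ρr))
      = (Pl - sl * ml) * (mr - sr * ρr) - (ml - sl * ρl) * (Pr - sr * mr) :=
    div_mul_cancel₀ _ hd
  have hul : (ml - sl * ρl) * ustar - σstar = Pl - sl * ml := by
    apply mul_left_cancel₀ hd
    linear_combination (ml - sl * ρl) * hu - hσ
  have hur : (mr - sr * ρr) * ustar - σstar = Pr - sr * mr := by
    apply mul_left_cancel₀ hd
    linear_combination (mr - sr * ρr) * hu - hσ
  refine ⟨by linear_combination hm, by linear_combination ustar * hm + hul,
    by linear_combination -hp, by linear_combination -(ustar * hp) - hur⟩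
end
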